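/- arXiv:1505.07445 — 6 statements merged into one kernel-verified Lean document; each statement's English description precedes it below -/
import Mathlib

section
/- Let α > −1 be real and p a natural number. Then for every z > 0, the p-th derivative of the function z ↦ e^{−z} z^{p+α} satisfies (d^p/dz^p)(e^{−z} z^{p+α}) = e^{−z} z^{α} · Σ_{k=0}^{p} (p!/(k!(p−k)!)) · (Γ(p+α+1)/Γ(k+α+1)) · (−z)^k. Equivalently, the Laguerre polynomial L^α_p defined by the Rodrigues formula L^α_p(z) = e^z z^{−α}/p! · (d^p/dz^p)(e^{−z} z^{p+α}) satisfies p!·L^α_p(z) = Σ_{k=0}^{p} binom(p,k) Γ(p+α+1)/Γ(k+α+1) · (−z)^k. -/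
open Real Finset

lemma laguerre_aux (α : ℝ) (hα : -1 < α) (p : ℕ) :
    ∀ n, n ≤ p → ∀ z : ℝ, 0 < z →
      iteratedDeriv n (fun x : ℝ => Real.exp (-x) * x ^ ((p : ℝ) + α)) z
        = ∑ k ∈ Finset.range (n + 1),
            (n.choose k : ℝ) * ((-1:ℝ)^n * (-1:ℝ)^k)
              * (Real.Gamma ((p:ℝ) + α + 1) / Real.Gamma ((p:ℝ) + α + 1 - k))
              * (Real.exp (-z) * z ^ ((p:ℝ) + α - k)) := by
  have hΓtop : Real.Gamma ((p:ℝ) + α + 1) ≠ 0 := by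
    have hp : (0:ℝ) ≤ (p:ℝ) := Nat.cast_nonneg p
    exact (Real.Gamma_pos_of_pos (by linarith)).ne'
  intro n
  induction n with
  | zero =>
    intro _ z hz
    simp [iteratedDeriv_zero, div_self hΓtop]
  | succ n ih =>
    intro hn z hz
    set β : ℝ := (p:ℝ) + α with hβ
    have hβk : ∀ k : ℕ, k ≤ n → (0:ℝ) < β - k := by
      intro k hk
      have h1 : (k:ℝ) ≤ (n:ℝ) := Nat.cast_le.mpr hk
      have h2 : (n:ℝ) + 1 ≤ (p:ℝ) := by exact_mod_cast Nat.cast_le.mpr hn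
      simp only [hβ]; linarith
    set c : ℕ → ℝ := fun k =>
      (n.choose k : ℝ) * ((-1:ℝ)^n * (-1:ℝ)^k)
        * (Real.Gamma (β + 1) / Real.Gamma (β + 1 - k)) with hc
    set t : ℕ → ℝ := fun k => Real.exp (-z) * z ^ (β - k) with ht
    rw [iteratedDeriv_succ]
    have hev : deriv (iteratedDeriv n (fun x : ℝ => Real.exp (-x) * x ^ β)) z
        = deriv (fun x : ℝ => ∑ k ∈ Finset.range (n + 1),
            c k * (Real.exp (-x) * x ^ (β - k))) z := by
      apply Filter.EventuallyEq.deriv_eq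
      filter_upwards [Ioi_mem_nhds hz] with x hx
      exact ih (Nat.le_of_succ_le hn) x hx
    rw [hev]
    have hder : HasDerivAt (fun x : ℝ => ∑ k ∈ Finset.range (n + 1),
          c k * (Real.exp (-x) * x ^ (β - k)))
        (∑ k ∈ Finset.range (n + 1),
          c k * (-(Real.exp (-z)) * z ^ (β - k)
            + Real.exp (-z) * ((β - k) * z ^ (β - k - 1)))) z := by
      apply HasDerivAt.fun_sum
      intro k hk
      have h1 : HasDerivAt (fun x : ℝ => Real.exp (-x)) (-(Real.exp (-z))) z := by
        have := (Real.hasDerivAt_exp (-z)).comp z ((hasDerivAt_id z).neg)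
        simpa [Function.comp_def] using this
      have h2 : HasDerivAt (fun x : ℝ => x ^ (β - k)) ((β - k) * z ^ (β - k - 1)) z :=
        Real.hasDerivAt_rpow_const (Or.inl hz.ne')
      exact (h1.mul h2).const_mul _
    rw [hder.deriv]
    -- now pure algebra on sums
    have hstep : ∀ k : ℕ, k ≤ n →
        c k * (β - k) = (n.choose k : ℝ) * ((-1:ℝ)^n * (-1:ℝ)^k)
          * (Real.Gamma (β + 1) / Real.Gamma (β + 1 - (k+1:ℕ))) := by
      intro k hk
      have hpos := hβk k hk
      have hΓ : Real.Gamma (β + 1 - k) = (β - k) * Real.Gamma (β - k) := by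
        have := Real.Gamma_add_one hpos.ne'
        rw [show β + 1 - (k:ℝ) = β - k + 1 by ring, this]
      have hΓk : Real.Gamma (β - k) ≠ 0 := (Real.Gamma_pos_of_pos hpos).ne'
      have harg : β + 1 - ((k+1:ℕ):ℝ) = β - k := by push_cast; ring
      simp only [hc]
      rw [harg, hΓ]
      field_simp
    -- rewrite each derivative term
    have hterm : ∀ k ∈ Finset.range (n + 1),
        c k * (-(Real.exp (-z)) * z ^ (β - k)
            + Real.exp (-z) * ((β - k) * z ^ (β - k - 1)))
          = -(c k * t k) + (c k * (β - k)) * t (k + 1) := by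
      intro k hk
      have : z ^ (β - k - 1) = z ^ (β - ((k+1:ℕ):ℝ)) := by push_cast; ring_nf
      rw [this, ht]
      push_cast
      ring
    rw [Finset.sum_congr rfl hterm]
    rw [Finset.sum_add_distrib]
    -- RHS: sum over range (n+2) of c' k * t k
    have hRHS : ∑ k ∈ Finset.range (n + 1 + 1),
        ((n+1).choose k : ℝ) * ((-1:ℝ)^(n+1) * (-1:ℝ)^k)
          * (Real.Gamma (β + 1) / Real.Gamma (β + 1 - k))
          * (Real.exp (-z) * z ^ (β - k))
        = ((∑ k ∈ Finset.range n,
            ((n+1).choose (k+1) : ℝ) * ((-1:ℝ)^(n+1) * (-1:ℝ)^(k+1))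
              * (Real.Gamma (β + 1) / Real.Gamma (β + 1 - ((k+1:ℕ):ℝ))) * t (k+1))
          + ((n+1).choose (n+1) : ℝ) * ((-1:ℝ)^(n+1) * (-1:ℝ)^(n+1))
              * (Real.Gamma (β + 1) / Real.Gamma (β + 1 - ((n+1:ℕ):ℝ))) * t (n+1))
          + ((-1:ℝ)^(n+1)) * t 0 := by
      rw [Finset.sum_range_succ', Finset.sum_range_succ]
      simp [ht, div_self hΓtop]
    have hA : ∑ k ∈ Finset.range (n + 1), -(c k * t k)
        = (∑ i ∈ Finset.range n, -(c (i+1) * t (i+1))) + ((-1:ℝ)^(n+1)) * t 0 := by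
      rw [Finset.sum_range_succ']
      congr 1
      simp only [hc, Nat.choose_zero_right, Nat.cast_one, Nat.cast_zero, pow_zero, mul_one,
        one_mul, sub_zero, div_self hΓtop]
      ring
    have hB : ∑ k ∈ Finset.range (n + 1), (c k * (β - k)) * t (k+1)
        = (∑ i ∈ Finset.range n, (c i * (β - i)) * t (i+1)) + (c n * (β - n)) * t (n+1) :=
      Finset.sum_range_succ _ _
    rw [hRHS, hA, hB]
    have heven : ∀ m : ℕ, (-1:ℝ)^m * (-1:ℝ)^m = 1 := by
      intro m
      rw [← pow_add]
      exact Even.neg_one_pow ⟨m, rfl⟩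
    have hmerge : (∑ i ∈ Finset.range n, -(c (i+1) * t (i+1)))
          + (∑ i ∈ Finset.range n, (c i * (β - i)) * t (i+1))
        = ∑ i ∈ Finset.range n,
            ((n+1).choose (i+1) : ℝ) * ((-1:ℝ)^(n+1) * (-1:ℝ)^(i+1))
              * (Real.Gamma (β + 1) / Real.Gamma (β + 1 - ((i+1:ℕ):ℝ))) * t (i+1) := by
      rw [← Finset.sum_add_distrib]
      apply Finset.sum_congr rfl
      intro i hi
      have hi' : i ≤ n := le_of_lt (Finset.mem_range.mp hi)
      rw [hstep i hi']
      simp only [hc, Nat.choose_succ_succ]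
      push_cast
      ring
    have hlast : (c n * (β - n)) * t (n+1)
        = ((n+1).choose (n+1) : ℝ) * ((-1:ℝ)^(n+1) * (-1:ℝ)^(n+1))
            * (Real.Gamma (β + 1) / Real.Gamma (β + 1 - ((n+1:ℕ):ℝ))) * t (n+1) := by
      rw [hstep n le_rfl, Nat.choose_self, Nat.choose_self, heven n, heven (n+1)]
    linear_combination hmerge + hlast

/-- Rodrigues-type formula for the generalized Laguerre polynomial: for `α > −1`, `p ∈ ℕ`, and
`z > 0`, the `p`-th derivative of `z ↦ e^{−z} z^{p+α}` equals
`e^{−z} z^α · Σ_{k=0}^p (p choose k) (Γ(p+α+1)/Γ(k+α+1)) (−z)^k`; equivalently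
`p!·L^α_p(z) = Σ_{k=0}^p (p choose k) Γ(p+α+1)/Γ(k+α+1) (−z)^k` for
`L^α_p(z) := e^z z^{−α}/p! · (d^p/dz^p)(e^{−z} z^{p+α})`. -/
theorem laguerre_rodrigues (α : ℝ) (hα : -1 < α) (p : ℕ) :
    ∀ z : ℝ, 0 < z →
      iteratedDeriv p (fun x : ℝ => Real.exp (-x) * x ^ ((p : ℝ) + α)) z
          = Real.exp (-z) * z ^ α *
            ∑ k ∈ Finset.range (p + 1),
              (p.choose k : ℝ) * (Real.Gamma ((p : ℝ) + α + 1) / Real.Gamma ((k : ℝ) + α + 1))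
                * (-z) ^ k ∧
      (p.factorial : ℝ) *
          (Real.exp z * z ^ (-α) / (p.factorial : ℝ) *
            iteratedDeriv p (fun x : ℝ => Real.exp (-x) * x ^ ((p : ℝ) + α)) z)
        = ∑ k ∈ Finset.range (p + 1),
            (p.choose k : ℝ) * (Real.Gamma ((p : ℝ) + α + 1) / Real.Gamma ((k : ℝ) + α + 1))
              * (-z) ^ k := by
  intro z hz
  have h1 := laguerre_aux α hα p p le_rfl z hz
  have hsum : ∑ k ∈ Finset.range (p + 1),
        (p.choose k : ℝ) * ((-1:ℝ)^p * (-1:ℝ)^k)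
          * (Real.Gamma ((p:ℝ) + α + 1) / Real.Gamma ((p:ℝ) + α + 1 - k))
          * (Real.exp (-z) * z ^ ((p:ℝ) + α - k))
      = Real.exp (-z) * z ^ α *
          ∑ k ∈ Finset.range (p + 1),
            (p.choose k : ℝ) * (Real.Gamma ((p:ℝ) + α + 1) / Real.Gamma ((k:ℝ) + α + 1))
              * (-z) ^ k := by
    rw [← Finset.sum_range_reflect, Finset.mul_sum]
    apply Finset.sum_congr rfl
    intro j hj
    have hj' : j ≤ p := Nat.lt_succ_iff.mp (Finset.mem_range.mp hj)
    have hidx : p + 1 - 1 - j = p - j := by omega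
    rw [hidx]
    have hcast : ((p - j : ℕ):ℝ) = (p:ℝ) - (j:ℝ) := by
      push_cast [Nat.cast_sub hj']; ring
    have hch : (p.choose (p - j)) = p.choose j := Nat.choose_symm hj'
    have hΓarg : (p:ℝ) + α + 1 - ((p-j:ℕ):ℝ) = (j:ℝ) + α + 1 := by rw [hcast]; ring
    have hz1 : z ^ ((p:ℝ) + α - ((p-j:ℕ):ℝ)) = z ^ α * z ^ j := by
      rw [hcast, show (p:ℝ) + α - ((p:ℝ) - (j:ℝ)) = α + (j:ℝ) by ring,
        Real.rpow_add hz, Real.rpow_natCast]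
    have hpair : (-1:ℝ)^(p-j) * (-1:ℝ)^j = (-1:ℝ)^p := by
      rw [← pow_add, Nat.sub_add_cancel hj']
    have h2 : ((-1:ℝ)^(p-j)) * ((-1:ℝ)^(p-j)) = 1 := by
      rw [← pow_add]
      exact Even.neg_one_pow ⟨p-j, rfl⟩
    have hsgn : (-1:ℝ)^p * (-1:ℝ)^(p-j) = (-1:ℝ)^j := by
      calc (-1:ℝ)^p * (-1:ℝ)^(p-j)
          = ((-1:ℝ)^(p-j) * (-1:ℝ)^j) * (-1:ℝ)^(p-j) := by rw [hpair]
        _ = (-1:ℝ)^j * ((-1:ℝ)^(p-j) * (-1:ℝ)^(p-j)) := by ring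
        _ = (-1:ℝ)^j := by rw [h2]; ring
    rw [hch, hΓarg, hz1, hsgn, neg_pow z j]
    ring
  refine ⟨by rw [h1, hsum], ?_⟩
  rw [h1, hsum]
  have hfac : (p.factorial : ℝ) ≠ 0 := Nat.cast_ne_zero.mpr p.factorial_ne_zero
  have e1 : Real.exp z * Real.exp (-z) = 1 := by
    rw [← Real.exp_add]; simp
  have e2 : z ^ (-α) * z ^ α = 1 := by
    rw [← Real.rpow_add hz]; simp
  set S := ∑ k ∈ Finset.range (p + 1),
      (p.choose k : ℝ) * (Real.Gamma ((p:ℝ) + α + 1) / Real.Gamma ((k:ℝ) + α + 1)) * (-z) ^ k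
  calc (p.factorial : ℝ) * (Real.exp z * z ^ (-α) / (p.factorial : ℝ)
          * (Real.exp (-z) * z ^ α * S))
      = (Real.exp z * Real.exp (-z)) * (z ^ (-α) * z ^ α) * S := by
        field_simp
    _ = S := by rw [e1, e2]; ring
end

section
/- For all real α ≥ 0, z ≥ 0 and every natural number p ≥ 1, one has Σ_{k=0}^{p} binom(p,k) z^k Γ(α+1+p)/Γ(α+1+k) ≤ (12(1+z))^p · Γ(α+1+p)/Γ(α+1). (In terms of Laguerre polynomials this reads p!·L^α_p(−z) ≤ (12(1+z))^p Γ(α+1+p)/Γ(α+1).) -/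
open Real Finset

lemma gamma_mono_aux (α : ℝ) (hα : 0 ≤ α) (k : ℕ) :
    Real.Gamma (α + 1) ≤ Real.Gamma (α + 1 + k) := by
  induction k with
  | zero => simp
  | succ n ih =>
    have h1 : (0:ℝ) < α + 1 + n := by positivity
    have h2 : Real.Gamma (α + 1 + (n + 1)) = (α + 1 + n) * Real.Gamma (α + 1 + n) := by
      have := Real.Gamma_add_one (ne_of_gt h1)
      push_cast
      rw [show α + 1 + (n + 1) = (α + 1 + n) + 1 by ring, this]
    push_cast
    rw [h2]
    have hg : 0 < Real.Gamma (α + 1 + n) := Real.Gamma_pos_of_pos h1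
    calc Real.Gamma (α + 1) ≤ Real.Gamma (α + 1 + n) := ih
      _ ≤ (α + 1 + n) * Real.Gamma (α + 1 + n) := by nlinarith

/-- For `α ≥ 0`, `z ≥ 0` and `p ≥ 1`,
`Σ_{k=0}^p (p choose k) z^k Γ(α+1+p)/Γ(α+1+k) ≤ (12(1+z))^p Γ(α+1+p)/Γ(α+1)`,
i.e. `p!·L^α_p(−z) ≤ (12(1+z))^p Γ(α+1+p)/Γ(α+1)`. -/
theorem laguerre_neg_bound (α z : ℝ) (hα : 0 ≤ α) (hz : 0 ≤ z) (p : ℕ) (hp : 1 ≤ p) :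
    ∑ k ∈ Finset.range (p + 1),
        (p.choose k : ℝ) * z ^ k * (Real.Gamma (α + 1 + p) / Real.Gamma (α + 1 + k))
      ≤ (12 * (1 + z)) ^ p * (Real.Gamma (α + 1 + p) / Real.Gamma (α + 1)) := by
  have hg1 : 0 < Real.Gamma (α + 1) := Real.Gamma_pos_of_pos (by positivity)
  have hgp : 0 < Real.Gamma (α + 1 + p) := Real.Gamma_pos_of_pos (by positivity)
  have step1 : ∑ k ∈ Finset.range (p + 1),
        (p.choose k : ℝ) * z ^ k * (Real.Gamma (α + 1 + p) / Real.Gamma (α + 1 + k))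
      ≤ ∑ k ∈ Finset.range (p + 1),
        (p.choose k : ℝ) * z ^ k * (Real.Gamma (α + 1 + p) / Real.Gamma (α + 1)) := by
    apply Finset.sum_le_sum
    intro k _
    have hgk : 0 < Real.Gamma (α + 1 + k) := Real.Gamma_pos_of_pos (by positivity)
    have hdiv : Real.Gamma (α + 1 + p) / Real.Gamma (α + 1 + k)
        ≤ Real.Gamma (α + 1 + p) / Real.Gamma (α + 1) :=
      div_le_div_of_nonneg_left hgp.le hg1 (gamma_mono_aux α hα k)
    have hnn : (0:ℝ) ≤ (p.choose k : ℝ) * z ^ k := by positivity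
    exact mul_le_mul_of_nonneg_left hdiv hnn
  have step2 : ∑ k ∈ Finset.range (p + 1),
        (p.choose k : ℝ) * z ^ k * (Real.Gamma (α + 1 + p) / Real.Gamma (α + 1))
      = (1 + z) ^ p * (Real.Gamma (α + 1 + p) / Real.Gamma (α + 1)) := by
    rw [← Finset.sum_mul]
    congr 1
    rw [show (1+z)=(z+1) by ring, add_pow]
    apply Finset.sum_congr rfl
    intro k _
    ring
  have step3 : (1 + z) ^ p ≤ (12 * (1 + z)) ^ p := by
    apply pow_le_pow_left₀ (by positivity)
    nlinarith
  calc _ ≤ (1 + z) ^ p * (Real.Gamma (α + 1 + p) / Real.Gamma (α + 1)) := step1.trans_eq step2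
    _ ≤ _ := mul_le_mul_of_nonneg_right step3 (by positivity)
end

section
/- Let ν ≥ 1 and λ be real numbers, a ≥ 0, and set R(t) = ∫₀ᵗ e^{−λs} ds (so R(t) = (1 − e^{−λt})/λ when λ ≠ 0). Suppose (f_p)_{p≥0} is a sequence of continuous nonnegative functions on [0, ∞) such that f_0(t) ≤ 1 for all t ≥ 0, and for every integer p ≥ 1 and every t ≥ 0, f_p(t) ≤ (a^{2p} + p(ν + 2(p−1)) ∫₀ᵗ f_{p−1}(s) e^{−pλs} ds) e^{pλt}. Then for every p ≥ 1 and t ≥ 0, f_p(t) ≤ e^{pλt} · Σ_{k=0}^{p} binom(p,k) (2R(t))^{p−k} a^{2k} Γ(ν/2 + p)/Γ(ν/2 + k). -/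
open Real Finset MeasureTheory intervalIntegral

noncomputable def Rint (lam t : ℝ) : ℝ := ∫ s in (0:ℝ)..t, Real.exp (-lam * s)

lemma Rint_hasDerivAt (lam t : ℝ) :
    HasDerivAt (Rint lam) (Real.exp (-lam * t)) t := by
  have hc : Continuous fun s : ℝ => Real.exp (-lam * s) := by continuity
  exact intervalIntegral.integral_hasDerivAt_right (hc.intervalIntegrable _ _)
    (hc.stronglyMeasurable.stronglyMeasurableAtFilter) hc.continuousAt

lemma Rint_continuous (lam : ℝ) : Continuous (Rint lam) :=
  continuous_iff_continuousAt.mpr fun t => (Rint_hasDerivAt lam t).continuousAt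

lemma Rint_zero (lam : ℝ) : Rint lam 0 = 0 := intervalIntegral.integral_same

lemma Rint_pow_integral (lam t : ℝ) (m : ℕ) :
    ∫ s in (0:ℝ)..t, (2 * Rint lam s) ^ m * Real.exp (-lam * s)
      = (2 * Rint lam t) ^ (m + 1) / (2 * ((m:ℝ) + 1)) := by
  have key : ∀ s ∈ Set.uIcc (0:ℝ) t,
      HasDerivAt (fun u => (2 * Rint lam u) ^ (m+1) / (2*((m:ℝ)+1)))
      ((2 * Rint lam s) ^ m * Real.exp (-lam * s)) s := by
    intro s _
    have h1 := (((Rint_hasDerivAt lam s).const_mul 2).pow (m+1)).div_const (2*((m:ℝ)+1))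
    refine h1.congr_deriv ?_
    have hm : ((m:ℝ)+1) ≠ 0 := by positivity
    simp only [Nat.add_sub_cancel]
    push_cast
    field_simp
  have hint : IntervalIntegrable (fun s => (2 * Rint lam s)^m * Real.exp (-lam*s)) volume 0 t := by
    apply Continuous.intervalIntegrable
    exact ((continuous_const.mul (Rint_continuous lam)).pow m).mul (by continuity)
  rw [intervalIntegral.integral_eq_sub_of_hasDerivAt key hint]
  rw [Rint_zero]
  norm_num

lemma coeff_aux (ν q c1 c2 m A G1 G2 X : ℝ) (hm : m + 1 ≠ 0) (hG2 : G2 ≠ 0)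
    (h : (q+1) * c1 = c2 * (m+1)) :
    (q+1) * (ν + 2*(q+1-1)) * (c1 * A * (G1/G2) * (X/(2*(m+1))))
      = c2 * X * A * ((ν/2+q) * G1 / G2) := by
  rw [show (q+1) * (ν + 2*(q+1-1)) * (c1 * A * (G1/G2) * (X/(2*(m+1))))
      = ((q+1)*c1) * ((ν + 2*(q+1-1)) * A * (G1/G2) * (X/(2*(m+1)))) from by ring, h]
  field_simp
  ring

/-- Inductive moment bound: if `f_0 ≤ 1` on `[0,∞)` and for `p ≥ 1`
`f_p(t) ≤ (a^{2p} + p(ν + 2(p−1)) ∫₀ᵗ f_{p−1}(s) e^{−pλs} ds) e^{pλt}`, then with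
`R(t) = ∫₀ᵗ e^{−λs} ds` one has
`f_p(t) ≤ e^{pλt} Σ_{k=0}^p (p choose k) (2R(t))^{p−k} a^{2k} Γ(ν/2+p)/Γ(ν/2+k)`. -/
theorem radial_moment_induction (ν lam a : ℝ) (hν : 1 ≤ ν) (ha : 0 ≤ a)
    (f : ℕ → ℝ → ℝ)
    (hcont : ∀ p, ContinuousOn (f p) (Set.Ici 0))
    (hnonneg : ∀ p, ∀ t : ℝ, 0 ≤ t → 0 ≤ f p t)
    (h0 : ∀ t : ℝ, 0 ≤ t → f 0 t ≤ 1)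
    (hrec : ∀ p : ℕ, 1 ≤ p → ∀ t : ℝ, 0 ≤ t →
      f p t ≤ (a ^ (2 * p) + (p : ℝ) * (ν + 2 * ((p : ℝ) - 1)) *
          ∫ s in (0 : ℝ)..t, f (p - 1) s * Real.exp (-((p : ℝ) * lam) * s)) *
        Real.exp ((p : ℝ) * lam * t)) :
    ∀ p : ℕ, 1 ≤ p → ∀ t : ℝ, 0 ≤ t →
      f p t ≤ Real.exp ((p : ℝ) * lam * t) *
        ∑ k ∈ Finset.range (p + 1),
          (p.choose k : ℝ) * (2 * ∫ s in (0 : ℝ)..t, Real.exp (-lam * s)) ^ (p - k)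
            * a ^ (2 * k) * (Real.Gamma (ν / 2 + p) / Real.Gamma (ν / 2 + k)) := by
  have hΓpos : ∀ k : ℕ, 0 < Real.Gamma (ν/2 + k) := by
    intro k
    apply Real.Gamma_pos_of_pos
    have : (0:ℝ) ≤ k := Nat.cast_nonneg k
    linarith
  have main : ∀ p : ℕ, ∀ t : ℝ, 0 ≤ t →
      f p t ≤ Real.exp ((p:ℝ)*lam*t) * ∑ k ∈ Finset.range (p+1),
        (p.choose k : ℝ) * (2 * Rint lam t) ^ (p - k) * a ^ (2*k) *
          (Real.Gamma (ν/2 + p) / Real.Gamma (ν/2 + k)) := by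
    intro p
    induction p with
    | zero =>
      intro t ht
      have hne : Real.Gamma (ν/2 + (0:ℕ)) ≠ 0 := (hΓpos 0).ne'
      simp only [Nat.cast_zero, add_zero] at hne
      simpa [div_self hne] using h0 t ht
    | succ p ih =>
      intro t ht
      have hrec' := hrec (p+1) (Nat.le_add_left 1 p) t ht
      simp only [Nat.add_sub_cancel] at hrec'
      push_cast at hrec' ⊢
      set R := Rint lam with hRdef
      set S : ℝ → ℝ := fun s => ∑ k ∈ Finset.range (p+1),
        (p.choose k : ℝ) * (2 * R s) ^ (p - k) * a ^ (2*k) *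
          (Real.Gamma (ν/2 + p) / Real.Gamma (ν/2 + k)) with hSdef
      have hScont : Continuous S := by
        apply continuous_finset_sum
        intro k _
        exact ((continuous_const.mul ((continuous_const.mul (Rint_continuous lam)).pow _)).mul
          continuous_const).mul continuous_const
      have hexpc : Continuous fun s : ℝ => Real.exp (-(((p:ℝ)+1) * lam) * s) := by continuity
      have hexpc2 : Continuous fun s : ℝ => Real.exp (-lam * s) := by continuity
      have hsub : Set.uIcc (0:ℝ) t ⊆ Set.Ici 0 := by
        rw [Set.uIcc_of_le ht]; exact Set.Icc_subset_Ici_self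
      have hint1 : IntervalIntegrable
          (fun s => f p s * Real.exp (-(((p:ℝ)+1) * lam) * s)) volume 0 t :=
        (((hcont p).mono hsub).mul hexpc.continuousOn).intervalIntegrable
      have hint2 : IntervalIntegrable (fun s => S s * Real.exp (-lam * s)) volume 0 t :=
        (hScont.mul hexpc2).intervalIntegrable _ _
      have hmono : (∫ s in (0:ℝ)..t, f p s * Real.exp (-(((p:ℝ)+1) * lam) * s))
          ≤ ∫ s in (0:ℝ)..t, S s * Real.exp (-lam * s) := by
        apply intervalIntegral.integral_mono_on ht hint1 hint2
        intro s hs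
        have hih := ih s hs.1
        calc f p s * Real.exp (-(((p:ℝ)+1) * lam) * s)
            ≤ (Real.exp ((p:ℝ)*lam*s) * S s) * Real.exp (-(((p:ℝ)+1) * lam) * s) :=
              mul_le_mul_of_nonneg_right hih (Real.exp_pos _).le
          _ = S s * (Real.exp ((p:ℝ)*lam*s) * Real.exp (-(((p:ℝ)+1) * lam) * s)) := by ring
          _ = S s * Real.exp (-lam * s) := by
              rw [← Real.exp_add, show (p:ℝ)*lam*s + -(((p:ℝ)+1) * lam) * s = -lam*s by ring]
      have hJ : (∫ s in (0:ℝ)..t, S s * Real.exp (-lam * s))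
          = ∑ k ∈ Finset.range (p+1), ((p.choose k:ℝ) * a^(2*k) *
              (Real.Gamma (ν/2+p)/Real.Gamma (ν/2+k))) *
              ((2*R t)^(p-k+1) / (2*(((p-k:ℕ):ℝ)+1))) := by
        have hfeq : (fun s => S s * Real.exp (-lam * s)) = fun s => ∑ k ∈ Finset.range (p+1),
            ((p.choose k:ℝ) * a^(2*k) * (Real.Gamma (ν/2+p)/Real.Gamma (ν/2+k))) *
            ((2*R s)^(p-k) * Real.exp (-lam*s)) := by
          funext s
          simp only [hSdef, Finset.sum_mul]
          exact Finset.sum_congr rfl fun k _ => by ring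
        rw [hfeq, intervalIntegral.integral_finset_sum]
        · refine Finset.sum_congr rfl fun k _ => ?_
          rw [intervalIntegral.integral_const_mul, hRdef, Rint_pow_integral]
        · intro k _
          apply Continuous.intervalIntegrable
          exact continuous_const.mul (((continuous_const.mul (Rint_continuous lam)).pow _).mul
            hexpc2)
      have hC : 0 ≤ ((p:ℝ)+1) * (ν + 2*(((p:ℝ)+1)-1)) := by
        have : (0:ℝ) ≤ p := Nat.cast_nonneg p
        nlinarith
      have heq : a ^ (2*(p+1)) + ((p:ℝ)+1) * (ν + 2*(((p:ℝ)+1)-1)) *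
            (∫ s in (0:ℝ)..t, S s * Real.exp (-lam * s))
          = ∑ k ∈ Finset.range (p+1+1),
            ((p+1).choose k : ℝ) * (2 * R t) ^ (p+1-k) * a ^ (2*k) *
              (Real.Gamma (ν/2 + ((p:ℝ)+1)) / Real.Gamma (ν/2 + k)) := by
        rw [hJ]
        conv_rhs => rw [Finset.sum_range_succ]
        have hne : Real.Gamma (ν/2 + ((p+1:ℕ):ℝ)) ≠ 0 := (hΓpos (p+1)).ne'
        have hlast : ((p+1).choose (p+1) : ℝ) * (2 * R t) ^ (p+1-(p+1)) * a ^ (2*(p+1)) *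
            (Real.Gamma (ν/2 + ((p:ℝ)+1)) / Real.Gamma (ν/2 + ((p+1:ℕ):ℝ)))
            = a ^ (2*(p+1)) := by
          have h2 : ((p+1:ℕ):ℝ) = (p:ℝ)+1 := by push_cast; ring
          rw [h2, div_self (h2 ▸ hne)]
          simp
        rw [hlast, Finset.mul_sum, add_comm]
        congr 1
        refine Finset.sum_congr rfl fun k hk => ?_
        have hkp : k ≤ p := Nat.lt_succ_iff.mp (Finset.mem_range.mp hk)
        have hpow : p + 1 - k = (p - k) + 1 := by omega
        have hΓrec : Real.Gamma (ν/2 + ((p:ℝ)+1)) = (ν/2 + p) * Real.Gamma (ν/2 + p) := by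
          rw [show ν/2 + ((p:ℝ)+1) = (ν/2 + p) + 1 by ring, Real.Gamma_add_one]
          have : (0:ℝ) ≤ p := Nat.cast_nonneg p
          positivity
        have hch : ((p:ℝ)+1) * (p.choose k : ℝ) = ((p+1).choose k : ℝ) * (((p-k:ℕ):ℝ)+1) := by
          have h1 := Nat.choose_mul_succ_eq p k
          have hcast : ((p.choose k : ℕ) : ℝ) * ((p:ℝ)+1)
              = (((p+1).choose k : ℕ) : ℝ) * ((p+1-k : ℕ) : ℝ) := by exact_mod_cast congrArg Nat.cast h1
          rw [show ((p+1-k:ℕ):ℝ) = ((p-k:ℕ):ℝ)+1 by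
            rw [Nat.cast_sub (by omega : k ≤ p+1), Nat.cast_sub hkp]; push_cast; ring] at hcast
          linarith
        rw [hpow, hΓrec]
        exact coeff_aux ν (p:ℝ) (p.choose k : ℝ) ((p+1).choose k : ℝ) ((p-k:ℕ):ℝ)
          (a^(2*k)) (Real.Gamma (ν/2+(p:ℝ))) (Real.Gamma (ν/2+(k:ℝ))) ((2*R t)^(p-k+1))
          (by positivity) (hΓpos k).ne' hch
      calc f (p+1) t
          ≤ (a ^ (2*(p+1)) + ((p:ℝ)+1) * (ν + 2*(((p:ℝ)+1)-1)) *
              ∫ s in (0:ℝ)..t, f p s * Real.exp (-(((p:ℝ)+1) * lam) * s)) *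
            Real.exp (((p:ℝ)+1) * lam * t) := hrec'
        _ ≤ (∑ k ∈ Finset.range (p+1+1),
              ((p+1).choose k : ℝ) * (2 * R t) ^ (p+1-k) * a ^ (2*k) *
                (Real.Gamma (ν/2 + ((p:ℝ)+1)) / Real.Gamma (ν/2 + k))) *
            Real.exp (((p:ℝ)+1) * lam * t) := by
            apply mul_le_mul_of_nonneg_right _ (Real.exp_pos _).le
            rw [← heq]
            have := mul_le_mul_of_nonneg_left hmono hC
            linarith
        _ = _ := by rw [mul_comm]
  intro p _ t ht
  exact main p t ht
end

section
/- Let (Ω, 𝔉, P) be a probability space and Y : Ω → [0, ∞) a measurable function. Let ν ≥ 1, c > 0 and b ≥ 0 be real numbers, and suppose that for every natural number p, E[Y^{2p}] ≤ Σ_{k=0}^{p} binom(p,k) (2c)^{p−k} b^{2k} Γ(ν/2 + p)/Γ(ν/2 + k). Then for every θ ≥ 0 with θc < 1, E[e^{θY²/2}] ≤ (1 − θc)^{−ν/2} exp(θb²/(2(1 − θc))). -/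
open Real Finset MeasureTheory ENNReal


lemma gamma_ratio_prod (s : ℝ) (hs : 0 < s) (m : ℕ) :
    Real.Gamma (s + m) = (∏ j ∈ Finset.range m, (s + j)) * Real.Gamma s := by
  induction m with
  | zero => simp
  | succ m ih =>
    have h : s + ((m + 1 : ℕ) : ℝ) = (s + m) + 1 := by push_cast; ring
    have hne : s + (m : ℝ) ≠ 0 := by positivity
    rw [h, Real.Gamma_add_one hne, ih, Finset.prod_range_succ]
    ring

lemma hasDerivAt_aux (t x : ℝ) (hx : x < 1) :
    HasDerivAt (fun y : ℝ => (1 - y) ^ t) ((-1) * t * (1 - x) ^ (t - 1)) x := by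
  have h1 : HasDerivAt (fun y : ℝ => 1 - y) (-1) x := by
    simpa using (hasDerivAt_id' x).const_sub (1:ℝ)
  exact h1.rpow_const (Or.inl (by linarith [hx]))

lemma iter_deriv_aux (s γ : ℝ) (hs : 0 < s) (hγ : 0 < γ) (hγ1 : γ < 1) (n : ℕ) :
    ∀ x ∈ Set.Icc (0:ℝ) γ,
      iteratedDerivWithin n (fun y : ℝ => (1 - y) ^ (-s)) (Set.Icc 0 γ) x
        = (∏ j ∈ Finset.range n, (s + j)) * (1 - x) ^ (-s - n) := by
  induction n with
  | zero =>
    intro x hx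
    simp [iteratedDerivWithin_zero]
  | succ n ih =>
    intro x hx
    have hud : UniqueDiffOn ℝ (Set.Icc (0:ℝ) γ) := uniqueDiffOn_Icc hγ
    have hx1 : x < 1 := lt_of_le_of_lt hx.2 hγ1
    rw [iteratedDerivWithin_succ]
    rw [derivWithin_congr ih (ih x hx)]
    have hd : HasDerivAt (fun y : ℝ => (∏ j ∈ Finset.range n, (s + j)) * (1 - y) ^ (-s - n))
        ((∏ j ∈ Finset.range n, (s + j)) * ((-1) * (-s - n) * (1 - x) ^ (-s - n - 1))) x :=
      (hasDerivAt_aux (-s - n) x hx1).const_mul _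
    rw [hd.hasDerivWithinAt.derivWithin (hud.uniqueDiffWithinAt hx)]
    rw [Finset.prod_range_succ]
    have he : -s - (n : ℝ) - 1 = -s - ((n + 1 : ℕ) : ℝ) := by push_cast; ring
    rw [he]
    ring

lemma partial_binomial_le (s γ : ℝ) (hs : 0 < s) (hγ0 : 0 ≤ γ) (hγ1 : γ < 1) (M : ℕ) :
    ∑ m ∈ Finset.range M, Real.Gamma (s + m) / (m.factorial * Real.Gamma s) * γ ^ m
      ≤ (1 - γ) ^ (-s) := by
  have h1γ : (0:ℝ) < 1 - γ := by linarith
  have hΓs : 0 < Real.Gamma s := Real.Gamma_pos_of_pos hs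
  rcases Nat.eq_zero_or_pos M with hM | hM
  · subst hM; simpa using (Real.rpow_pos_of_pos h1γ (-s)).le
  rcases eq_or_lt_of_le hγ0 with hγ | hγ
  · -- γ = 0
    subst hγ
    rw [Finset.sum_eq_single_of_mem 0 (Finset.mem_range.mpr hM)
      (fun m _ hm => by simp [zero_pow hm])]
    simp [Real.Gamma_pos_of_pos hs, ne_of_gt hΓs, div_self]
  -- 0 < γ < 1
  obtain ⟨n, rfl⟩ : ∃ n, M = n + 1 := ⟨M - 1, (Nat.succ_pred_eq_of_pos hM).symm⟩
  set f : ℝ → ℝ := fun y => (1 - y) ^ (-s) with hf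
  have hIcc : ∀ x ∈ Set.Icc (0:ℝ) γ, (1:ℝ) - x ≠ 0 := by
    intro x hx; have : x < 1 := lt_of_le_of_lt hx.2 hγ1; linarith
  have hcd : ContDiffOn ℝ n f (Set.Icc 0 γ) := by
    intro x hx
    exact (((contDiff_const.sub contDiff_id).contDiffAt).rpow_const_of_ne
      (hIcc x hx)).contDiffWithinAt
  have hdiff : DifferentiableOn ℝ (iteratedDerivWithin n f (Set.Icc 0 γ)) (Set.Ioo 0 γ) := by
    intro x hx
    have hx' : x ∈ Set.Icc (0:ℝ) γ := Set.Ioo_subset_Icc_self hx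
    have hx1 : x < 1 := lt_of_lt_of_le hx.2 hγ1.le
    have hg : DifferentiableWithinAt ℝ
        (fun y : ℝ => (∏ j ∈ Finset.range n, (s + j)) * (1 - y) ^ (-s - n)) (Set.Ioo 0 γ) x :=
      (((hasDerivAt_aux (-s - n) x hx1).const_mul _).differentiableAt).differentiableWithinAt
    exact hg.congr (fun y hy => iter_deriv_aux s γ hs hγ hγ1 n y (Set.Ioo_subset_Icc_self hy))
      (iter_deriv_aux s γ hs hγ hγ1 n x hx')
  obtain ⟨x', hx', heq⟩ := taylor_mean_remainder_lagrange hγ.ne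
    (by rw [Set.uIcc_of_le hγ.le]; exact hcd)
    (by rw [Set.uIcc_of_le hγ.le, Set.uIoo_of_le hγ.le]; exact hdiff)
  rw [Set.uIcc_of_le hγ.le] at heq
  rw [Set.uIoo_of_le hγ.le] at hx'
  have hrem : 0 ≤ iteratedDerivWithin (n + 1) f (Set.Icc 0 γ) x' * (γ - 0) ^ (n + 1)
      / ((n + 1).factorial : ℝ) := by
    rw [iter_deriv_aux s γ hs hγ hγ1 (n + 1) x' (Set.Ioo_subset_Icc_self hx')]
    have h1x : (0:ℝ) < 1 - x' := by
      have : x' < 1 := lt_of_lt_of_le hx'.2 hγ1.le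
      linarith
    have hp : 0 ≤ ∏ j ∈ Finset.range (n + 1), (s + (j:ℝ)) :=
      Finset.prod_nonneg (fun j _ => by positivity)
    have h2 : (0:ℝ) < (1 - x') ^ (-s - ((n+1:ℕ):ℝ)) := Real.rpow_pos_of_pos h1x _
    have h3 : (0:ℝ) ≤ (γ - 0) ^ (n + 1) := pow_nonneg (by linarith) _
    have h4 : (0:ℝ) < (((n+1).factorial : ℕ) : ℝ) := by positivity
    exact div_nonneg (mul_nonneg (mul_nonneg hp h2.le) h3) h4.le
  have htay : taylorWithinEval f n (Set.Icc 0 γ) 0 γ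
      = ∑ m ∈ Finset.range (n + 1), Real.Gamma (s + m) / (m.factorial * Real.Gamma s) * γ ^ m := by
    rw [taylor_within_apply]
    refine Finset.sum_congr rfl fun m hm => ?_
    rw [iter_deriv_aux s γ hs hγ hγ1 m 0 (Set.left_mem_Icc.mpr hγ0)]
    rw [gamma_ratio_prod s hs m]
    have : (1:ℝ) - 0 = 1 := by ring
    rw [this, Real.one_rpow]
    rw [smul_eq_mul]
    field_simp
    ring
  have : f γ = (1 - γ) ^ (-s) := rfl
  rw [← this, ← htay]
  linarith [heq ▸ hrem]

lemma finite_sum_le (ν c b θ : ℝ) (hν : 1 ≤ ν) (hc : 0 < c) (hb : 0 ≤ b)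
    (hθ : 0 ≤ θ) (hθc : θ * c < 1) (N : ℕ) :
    ∑ p ∈ Finset.range N, ((θ / 2) ^ p / p.factorial) *
      ∑ k ∈ Finset.range (p + 1), (p.choose k : ℝ) * (2 * c) ^ (p - k) * b ^ (2 * k) *
        (Real.Gamma (ν / 2 + p) / Real.Gamma (ν / 2 + k))
    ≤ (1 - θ * c) ^ (-(ν / 2)) * Real.exp (θ * b ^ 2 / (2 * (1 - θ * c))) := by
  set a : ℝ := ν / 2 with ha
  set γ : ℝ := θ * c with hγdef
  set β : ℝ := b ^ 2 / (2 * c) with hβ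
  have ha2 : (0:ℝ) < a := by rw [ha]; linarith
  have hγ0 : 0 ≤ γ := by rw [hγdef]; positivity
  have h1γ : (0:ℝ) < 1 - γ := by linarith
  have hβ0 : 0 ≤ β := by rw [hβ]; positivity
  have hΓpos : ∀ k : ℕ, (0:ℝ) < Real.Gamma (a + k) := fun k =>
    Real.Gamma_pos_of_pos (by positivity)
  set T : ℕ → ℕ → ℝ := fun k m => ((γ * β) ^ k / k.factorial) *
      (Real.Gamma ((a + k) + m) / (m.factorial * Real.Gamma (a + k)) * γ ^ m) with hT
  have hTnn : ∀ k m, 0 ≤ T k m := by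
    intro k m
    have h1 := hΓpos k
    have h2 : (0:ℝ) < Real.Gamma ((a + k) + m) := Real.Gamma_pos_of_pos (by positivity)
    have : (0:ℝ) ≤ (γ * β) ^ k := pow_nonneg (by positivity) _
    positivity
  -- step 1 : each term of LHS equals ∑ k ∈ range (p+1), T k (p - k)
  have hstep1 : ∀ p : ℕ, ((θ / 2) ^ p / p.factorial) *
      ∑ k ∈ Finset.range (p + 1), (p.choose k : ℝ) * (2 * c) ^ (p - k) * b ^ (2 * k) *
        (Real.Gamma (a + p) / Real.Gamma (a + k))
      = ∑ k ∈ Finset.range (p + 1), T k (p - k) := by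
    intro p
    rw [Finset.mul_sum]
    refine Finset.sum_congr rfl fun k hk => ?_
    have hkp : k ≤ p := Nat.lt_succ_iff.mp (Finset.mem_range.mp hk)
    have hpk : (a + k) + ((p - k : ℕ) : ℝ) = a + p := by
      have : ((p - k : ℕ) : ℝ) = (p : ℝ) - (k : ℝ) := by
        push_cast [Nat.cast_sub hkp]; ring
      rw [this]; ring
    rw [hT]
    simp only []
    rw [hpk]
    rw [Nat.cast_choose ℝ hkp]
    have h2c : (2 * c : ℝ) ≠ 0 := by positivity
    rw [pow_sub₀ _ h2c hkp]
    have hfacp : ((p.factorial : ℕ) : ℝ) ≠ 0 := by positivity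
    have hfack : ((k.factorial : ℕ) : ℝ) ≠ 0 := by positivity
    have hfacpk : (((p - k).factorial : ℕ) : ℝ) ≠ 0 := by positivity
    have hΓk := (hΓpos k).ne'
    have hb2 : b ^ (2 * k) = (b ^ 2) ^ k := by rw [pow_mul]
    have hθp : θ ^ p = θ ^ k * θ ^ (p - k) := by rw [← pow_add, Nat.add_sub_cancel' hkp]
    have hcp : c ^ p = c ^ k * c ^ (p - k) := by rw [← pow_add, Nat.add_sub_cancel' hkp]
    have h2p : (2:ℝ) ^ p = 2 ^ k * 2 ^ (p - k) := by rw [← pow_add, Nat.add_sub_cancel' hkp]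
    rw [hb2, hγdef, hβ]
    field_simp
    simp only [div_pow, mul_pow]
    rw [hθp, hcp, h2p]
    field_simp
  rw [Finset.sum_congr rfl (fun p _ => hstep1 p)]
  have hswap : ∑ p ∈ Finset.range N, ∑ k ∈ Finset.range (p + 1), T k (p - k)
      = ∑ k ∈ Finset.range N, ∑ p ∈ Finset.Ico k N, T k (p - k) := by
    refine Finset.sum_comm' fun p k => ?_
    simp only [Finset.mem_range, Finset.mem_Ico, Nat.lt_succ_iff]
    omega
  rw [hswap]
  have hbound : ∀ k ∈ Finset.range N, ∑ p ∈ Finset.Ico k N, T k (p - k)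
      ≤ ((γ * β) ^ k / k.factorial) * (1 - γ) ^ (-(a + k)) := by
    intro k _
    rw [Finset.sum_Ico_eq_sum_range]
    have : ∀ m, T k ((k + m) - k) = T k m := fun m => by rw [Nat.add_sub_cancel_left]
    rw [Finset.sum_congr rfl fun m _ => this m]
    rw [hT]
    simp only []
    rw [← Finset.mul_sum]
    have hk0 : (0:ℝ) ≤ (γ * β) ^ k / k.factorial := by
      have : (0:ℝ) ≤ (γ * β) ^ k := pow_nonneg (by positivity) _
      positivity
    exact mul_le_mul_of_nonneg_left
      (partial_binomial_le (a + k) γ (by positivity) hγ0 hθc _) hk0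
  refine le_trans (Finset.sum_le_sum hbound) ?_
  -- now ∑ k < N, ((γβ)^k / k!) * (1-γ)^(-(a+k)) ≤ (1-γ)^(-a) * exp (γβ/(1-γ))
  have hsplit : ∀ k : ℕ, ((γ * β) ^ k / k.factorial) * (1 - γ) ^ (-(a + (k:ℝ)))
      = (1 - γ) ^ (-a) * ((γ * β / (1 - γ)) ^ k / k.factorial) := by
    intro k
    have h1 : (1 - γ) ^ (-(a + (k:ℝ))) = (1 - γ) ^ (-a) * (1 - γ) ^ (-(k:ℝ)) := by
      rw [← Real.rpow_add h1γ]; ring_nf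
    have h2 : (1 - γ) ^ (-(k:ℝ)) = ((1 - γ)⁻¹) ^ k := by
      rw [Real.rpow_neg h1γ.le, Real.rpow_natCast, inv_pow]
    rw [h1, h2, div_pow, mul_pow]
    field_simp
    rw [mul_assoc, ← mul_pow (1 / (1 - γ)), one_div_mul_cancel h1γ.ne', one_pow, mul_one]
  rw [Finset.sum_congr rfl fun k _ => hsplit k, ← Finset.mul_sum]
  have hexp : ∑ k ∈ Finset.range N, (γ * β / (1 - γ)) ^ k / k.factorial
      ≤ Real.exp (γ * β / (1 - γ)) := Real.sum_le_exp_of_nonneg (by positivity) N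
  have harg : γ * β / (1 - γ) = θ * b ^ 2 / (2 * (1 - γ)) := by
    rw [hγdef, hβ]
    field_simp
  refine le_trans (mul_le_mul_of_nonneg_left hexp (Real.rpow_nonneg h1γ.le _)) ?_
  rw [harg]


/-- If the even moments of a nonnegative random variable `Y` satisfy the Laguerre-type bound
`E[Y^{2p}] ≤ Σ_{k=0}^p (p choose k)(2c)^{p−k} b^{2k} Γ(ν/2+p)/Γ(ν/2+k)`, then for `θ ≥ 0`
with `θc < 1`, `E[e^{θY²/2}] ≤ (1 − θc)^{−ν/2} exp(θb²/(2(1 − θc)))`. -/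
theorem exp_sq_moment_bound {Ω : Type*} [MeasurableSpace Ω] (P : Measure Ω)
    [IsProbabilityMeasure P] (Y : Ω → ℝ) (hY : Measurable Y) (hYnn : ∀ ω, 0 ≤ Y ω)
    (ν c b : ℝ) (hν : 1 ≤ ν) (hc : 0 < c) (hb : 0 ≤ b)
    (hmom : ∀ p : ℕ,
      ∫⁻ ω, ENNReal.ofReal ((Y ω) ^ (2 * p)) ∂P ≤
        ENNReal.ofReal (∑ k ∈ Finset.range (p + 1),
          (p.choose k : ℝ) * (2 * c) ^ (p - k) * b ^ (2 * k) *
            (Real.Gamma (ν / 2 + p) / Real.Gamma (ν / 2 + k)))) :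
    ∀ θ : ℝ, 0 ≤ θ → θ * c < 1 →
      ∫⁻ ω, ENNReal.ofReal (Real.exp (θ * (Y ω) ^ 2 / 2)) ∂P ≤
        ENNReal.ofReal ((1 - θ * c) ^ (-(ν / 2)) *
          Real.exp (θ * b ^ 2 / (2 * (1 - θ * c)))) := by
  intro θ hθ hθc
  set S : ℕ → ℝ := fun p => ∑ k ∈ Finset.range (p + 1),
      (p.choose k : ℝ) * (2 * c) ^ (p - k) * b ^ (2 * k) *
        (Real.Gamma (ν / 2 + p) / Real.Gamma (ν / 2 + k)) with hS
  have hSnn : ∀ p, 0 ≤ S p := by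
    intro p
    refine Finset.sum_nonneg fun k _ => ?_
    have h1 : (0:ℝ) < Real.Gamma (ν / 2 + (p:ℝ)) :=
      Real.Gamma_pos_of_pos (by have := Nat.cast_nonneg (α := ℝ) p; linarith)
    have h2 : (0:ℝ) < Real.Gamma (ν / 2 + (k:ℝ)) :=
      Real.Gamma_pos_of_pos (by have := Nat.cast_nonneg (α := ℝ) k; linarith)
    have h3 : (0:ℝ) ≤ (2 * c) ^ (p - k) := by positivity
    have h4 : (0:ℝ) ≤ b ^ (2 * k) := by positivity
    positivity
  have hcoef : ∀ n : ℕ, (0:ℝ) ≤ (θ / 2) ^ n / n.factorial := fun n =>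
    div_nonneg (pow_nonneg (by linarith) n) (Nat.cast_nonneg _)
  have hpt : ∀ ω : Ω, ENNReal.ofReal (Real.exp (θ * (Y ω) ^ 2 / 2)) =
      ∑' n : ℕ, ENNReal.ofReal (((θ / 2) ^ n / n.factorial) * (Y ω) ^ (2 * n)) := by
    intro ω
    have ht0 : 0 ≤ θ * (Y ω) ^ 2 / 2 := div_nonneg (mul_nonneg hθ (sq_nonneg _)) two_pos.le
    have hexp : Real.exp (θ * (Y ω) ^ 2 / 2)
        = ∑' n : ℕ, (θ * (Y ω) ^ 2 / 2) ^ n / n.factorial := by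
      rw [Real.exp_eq_exp_ℝ, NormedSpace.exp_eq_tsum_div]
    rw [hexp, ENNReal.ofReal_tsum_of_nonneg
      (fun n => div_nonneg (pow_nonneg ht0 n) (Nat.cast_nonneg _))
      (Real.summable_pow_div_factorial _)]
    refine tsum_congr fun n => ?_
    congr 1
    rw [pow_mul, show θ * (Y ω) ^ 2 / 2 = (θ / 2) * (Y ω) ^ 2 by ring, mul_pow]
    ring
  calc ∫⁻ ω, ENNReal.ofReal (Real.exp (θ * (Y ω) ^ 2 / 2)) ∂P
      = ∑' n : ℕ, ∫⁻ ω, ENNReal.ofReal (((θ / 2) ^ n / n.factorial) * (Y ω) ^ (2 * n)) ∂P := by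
        simp_rw [hpt]
        exact lintegral_tsum fun n =>
          (((hY.pow_const (2 * n)).const_mul _).ennreal_ofReal).aemeasurable
    _ ≤ ∑' n : ℕ, ENNReal.ofReal (((θ / 2) ^ n / n.factorial) * S n) := by
        refine ENNReal.tsum_le_tsum fun n => ?_
        calc ∫⁻ ω, ENNReal.ofReal (((θ / 2) ^ n / n.factorial) * (Y ω) ^ (2 * n)) ∂P
            = ENNReal.ofReal ((θ / 2) ^ n / n.factorial)
                * ∫⁻ ω, ENNReal.ofReal ((Y ω) ^ (2 * n)) ∂P := by
              simp_rw [ENNReal.ofReal_mul (hcoef n)]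
              exact lintegral_const_mul _ (hY.pow_const (2 * n)).ennreal_ofReal
          _ ≤ ENNReal.ofReal ((θ / 2) ^ n / n.factorial) * ENNReal.ofReal (S n) :=
              mul_le_mul_right (hmom n) _
          _ = ENNReal.ofReal (((θ / 2) ^ n / n.factorial) * S n) :=
              (ENNReal.ofReal_mul (hcoef n)).symm
    _ ≤ ENNReal.ofReal ((1 - θ * c) ^ (-(ν / 2)) * Real.exp (θ * b ^ 2 / (2 * (1 - θ * c)))) := by
        rw [ENNReal.tsum_eq_iSup_sum]
        refine iSup_le fun fs => ?_
        obtain ⟨N, hN⟩ := fs.exists_nat_subset_range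
        calc ∑ n ∈ fs, ENNReal.ofReal (((θ / 2) ^ n / n.factorial) * S n)
            ≤ ∑ n ∈ Finset.range N, ENNReal.ofReal (((θ / 2) ^ n / n.factorial) * S n) :=
              Finset.sum_le_sum_of_subset hN
          _ = ENNReal.ofReal (∑ n ∈ Finset.range N, ((θ / 2) ^ n / n.factorial) * S n) :=
              (ENNReal.ofReal_sum_of_nonneg fun n _ => mul_nonneg (hcoef n) (hSnn n)).symm
          _ ≤ ENNReal.ofReal ((1 - θ * c) ^ (-(ν / 2))
                * Real.exp (θ * b ^ 2 / (2 * (1 - θ * c)))) :=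
              ENNReal.ofReal_le_ofReal (finite_sum_le ν c b θ hν hc hb hθ hθc N)
end

section
/- Let (Ω, 𝔉, P) be a probability space and Y : Ω → [0, ∞) a measurable function. Let ν ≥ 2, c > 0, b ≥ 0 and θ > 0 be real numbers, and suppose that for every natural number p ≥ 1, E[Y^{2p}] ≤ Σ_{k=0}^{p} binom(p,k) (2c)^{p−k} b^{2k} Γ(ν/2 + p)/Γ(ν/2 + k). Set 𝐑 = 12θ²(b² + 2c) and Σ = Σ_{p=0}^{∞} ((4𝐑)^p/(2p)!) · Γ(ν/2 + p)/Γ(ν/2). Then the series Σ converges and E[e^{θY}] ≤ 1 + (1 + 𝐑^{−1/2})(Σ − 1). -/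
open Real Finset MeasureTheory ENNReal

noncomputable def Gr (x : ℝ) (k : ℕ) : ℝ := Real.Gamma (x + k) / Real.Gamma x

noncomputable def aa (R x : ℝ) (p : ℕ) : ℝ :=
  (4 * R) ^ p / ((2 * p).factorial : ℝ) * Gr x p

lemma gamma_shift_pos {x : ℝ} (hx : 1 ≤ x) (k : ℕ) : 0 < Real.Gamma (x + k) := by
  have h0 : (0:ℝ) < x := lt_of_lt_of_le one_pos hx
  exact Real.Gamma_pos_of_pos (by positivity)

lemma gamma_shift_succ {x : ℝ} (hx : 1 ≤ x) (k : ℕ) :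
    Real.Gamma (x + (k + 1 : ℕ)) = (x + k) * Real.Gamma (x + k) := by
  have h0 : (0:ℝ) < x := lt_of_lt_of_le one_pos hx
  have h1 : x + ((k + 1 : ℕ) : ℝ) = (x + k) + 1 := by push_cast; ring
  rw [h1, Real.Gamma_add_one (by positivity)]

lemma gamma_shift_mono {x : ℝ} (hx : 1 ≤ x) : Monotone fun k : ℕ => Real.Gamma (x + k) := by
  apply monotone_nat_of_le_succ
  intro k
  rw [gamma_shift_succ hx k]
  nlinarith [gamma_shift_pos hx k, (Nat.cast_nonneg k : (0:ℝ) ≤ k)]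

lemma gamma_shift_le {x : ℝ} (hx : 1 ≤ x) (k : ℕ) :
    Real.Gamma (x + k) ≤ Real.Gamma x * (x ^ k * (k.factorial : ℝ)) := by
  have h0 : (0:ℝ) < x := lt_of_lt_of_le one_pos hx
  induction k with
  | zero => simp
  | succ k ih =>
    rw [gamma_shift_succ hx k]
    have h1 : x + (k:ℝ) ≤ x * ((k:ℝ) + 1) := by nlinarith [(Nat.cast_nonneg k : (0:ℝ) ≤ k)]
    calc (x + k) * Real.Gamma (x + k) ≤ (x * ((k:ℝ)+1)) * (Real.Gamma x * (x ^ k * k.factorial)) := by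
          apply mul_le_mul h1 ih (gamma_shift_pos hx k).le (by positivity)
      _ = Real.Gamma x * (x ^ (k+1) * ((k+1).factorial : ℝ)) := by
          rw [Nat.factorial_succ]; push_cast; ring

lemma Gr_pos {x : ℝ} (hx : 1 ≤ x) (k : ℕ) : 0 < Gr x k :=
  div_pos (gamma_shift_pos hx k) (by simpa using gamma_shift_pos hx 0)

lemma Gr_zero {x : ℝ} (hx : 1 ≤ x) : Gr x 0 = 1 := by
  have := gamma_shift_pos hx 0
  simp only [Gr, Nat.cast_zero, add_zero] at *
  exact div_self this.ne'

lemma Gr_mono {x : ℝ} (hx : 1 ≤ x) {k l : ℕ} (h : k ≤ l) : Gr x k ≤ Gr x l := by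
  have h0 : 0 < Real.Gamma x := by simpa using gamma_shift_pos hx 0
  unfold Gr
  gcongr
  exact gamma_shift_mono hx h

lemma Gr_one_le {x : ℝ} (hx : 1 ≤ x) (k : ℕ) : 1 ≤ Gr x k := by
  rw [← Gr_zero hx]; exact Gr_mono hx (Nat.zero_le k)

lemma Gr_le {x : ℝ} (hx : 1 ≤ x) (k : ℕ) : Gr x k ≤ x ^ k * (k.factorial : ℝ) := by
  have h0 : 0 < Real.Gamma x := by simpa using gamma_shift_pos hx 0
  rw [Gr, div_le_iff₀ h0]
  calc Real.Gamma (x + k) ≤ Real.Gamma x * (x ^ k * k.factorial) := gamma_shift_le hx k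
    _ = x ^ k * (k.factorial : ℝ) * Real.Gamma x := by ring

lemma Gr_succ {x : ℝ} (hx : 1 ≤ x) (k : ℕ) : Gr x (k + 1) = (x + k) * Gr x k := by
  rw [Gr, Gr, gamma_shift_succ hx k, mul_div_assoc]

lemma aa_nonneg {x R : ℝ} (hx : 1 ≤ x) (hR : 0 < R) (p : ℕ) : 0 ≤ aa R x p := by
  have := Gr_pos hx p
  unfold aa; positivity

lemma aa_zero {x R : ℝ} (hx : 1 ≤ x) : aa R x 0 = 1 := by
  simp [aa, Gr_zero hx]

lemma aa_summable {x R : ℝ} (hx : 1 ≤ x) (hR : 0 < R) : Summable (aa R x) := by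
  have h0 : (0:ℝ) < x := lt_of_lt_of_le one_pos hx
  apply Summable.of_nonneg_of_le (aa_nonneg hx hR)
    (f := fun p => (4 * R * x) ^ p / (p.factorial : ℝ)) ?_
    (Real.summable_pow_div_factorial (4 * R * x))
  intro p
  have hfac : ((p.factorial : ℝ)) * (p.factorial : ℝ) ≤ ((2 * p).factorial : ℝ) := by
    exact_mod_cast Nat.le_of_dvd (2 * p).factorial_pos
      (by simpa [two_mul] using Nat.factorial_mul_factorial_dvd_factorial_add p p)
  calc aa R x p = (4 * R) ^ p * Gr x p / ((2 * p).factorial : ℝ) := by unfold aa; ring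
    _ ≤ (4 * R) ^ p * (x ^ p * (p.factorial : ℝ)) / ((p.factorial : ℝ) * (p.factorial : ℝ)) := by
        apply div_le_div₀ (by positivity) ?_ (by positivity) hfac
        exact mul_le_mul_of_nonneg_left (Gr_le hx p) (by positivity)
    _ = (4 * R * x) ^ p / (p.factorial : ℝ) := by
        have hpfac : ((p.factorial : ℝ)) ≠ 0 := by positivity
        rw [mul_pow]
        field_simp
        ring

lemma amgm_aux {u v w z : ℝ} (hv : 0 ≤ v) (huv : u * v = 1) (hw : 0 ≤ w) (hz : 0 ≤ z) :
    2 * (w ^ 2 * z) ≤ u * (w ^ 2 * z ^ 2) + v * w ^ 2 := by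
  have key : u * (w ^ 2 * z ^ 2) + v * w ^ 2 - 2 * (w ^ 2 * z) = v * (w * (u * z - 1)) ^ 2 := by
    linear_combination (2 * w ^ 2 * z - u * w ^ 2 * z ^ 2) * huv
  nlinarith [mul_nonneg hv (sq_nonneg (w * (u * z - 1)))]

lemma pow48 (p : ℕ) : (p : ℝ) + 1 ≤ 48 ^ p := by
  have h := one_add_mul_le_pow (by norm_num : (-2:ℝ) ≤ 47) p
  norm_num at h
  nlinarith [(Nat.cast_nonneg p : (0:ℝ) ≤ p)]

lemma even_real {x R q : ℝ} (hx : 1 ≤ x) (hR : 0 < R) (hq0 : 0 ≤ q) (hqR : q ≤ 4 * R)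
    (p : ℕ) : q ^ p * Gr x p / ((2 * p).factorial : ℝ) ≤ aa R x p := by
  have hG := Gr_pos hx p
  calc q ^ p * Gr x p / ((2 * p).factorial : ℝ)
      ≤ (4 * R) ^ p * Gr x p / ((2 * p).factorial : ℝ) := by gcongr
    _ = aa R x p := by unfold aa; ring

lemma odd_real {x q t : ℝ} (hx : 1 ≤ x) (hq : 0 < q) (ht : 0 < t) (ht2 : t ^ 2 = 12 * q)
    (p : ℕ) :
    Real.sqrt 12 / t * q ^ (p + 1) * Gr x (p + 1) / (2 * ((2 * p + 1).factorial : ℝ))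
      + t / Real.sqrt 12 * q ^ p * Gr x p / (2 * ((2 * p + 1).factorial : ℝ))
      ≤ t⁻¹ * aa (12 * q) x (p + 1) := by
  have hs : (0:ℝ) < Real.sqrt 12 := by positivity
  have hs2 : Real.sqrt 12 ^ 2 = 12 := Real.sq_sqrt (by norm_num)
  have hs3 : (3:ℝ) ≤ Real.sqrt 12 := by nlinarith
  set s := Real.sqrt 12 with hsdef
  set m := ((2 * p + 1).factorial : ℝ) with hmdef
  have hm : (0:ℝ) < m := by positivity
  have hfac2 : ((2 * (p + 1)).factorial : ℝ) = (2 * (p:ℝ) + 2) * m := by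
    have h1 : 2 * (p + 1) = (2 * p + 1) + 1 := by ring
    rw [h1, Nat.factorial_succ]; push_cast; ring
  have hG1 := Gr_pos hx p
  have hG2 := Gr_pos hx (p + 1)
  have hGle : Gr x p ≤ Gr x (p + 1) := Gr_mono hx (Nat.le_succ p)
  have e1 : s / t * q ^ (p + 1) = 12 * q ^ (p + 1) / (s * t) := by
    field_simp
    linear_combination hs2
  have e2 : t / s * q ^ p = 12 * q ^ (p + 1) / (s * t) := by
    rw [pow_succ]
    field_simp
    linear_combination ht2
  rw [e1, e2]
  have hW : 8 * (p:ℝ) + 8 ≤ 48 ^ (p + 1) := by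
    have := pow48 p
    calc 8 * (p:ℝ) + 8 ≤ 48 * ((p:ℝ) + 1) := by linarith
      _ ≤ 48 * 48 ^ p := by nlinarith
      _ = 48 ^ (p + 1) := by rw [pow_succ]; ring
  have haa : aa (12 * q) x (p + 1)
      = 48 ^ (p + 1) * q ^ (p + 1) * Gr x (p + 1) / ((2 * (p:ℝ) + 2) * m) := by
    unfold aa
    rw [hfac2]
    have h48 : (4 * (12 * q)) ^ (p + 1) = 48 ^ (p + 1) * q ^ (p + 1) := by
      rw [← mul_pow]; congr 1; ring
    rw [h48]; ring
  rw [haa]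
  have hQ : (0:ℝ) < q ^ (p + 1) := by positivity
  -- combine the two equal halves and compare
  calc 12 * q ^ (p + 1) / (s * t) * Gr x (p + 1) / (2 * m)
        + 12 * q ^ (p + 1) / (s * t) * Gr x p / (2 * m)
      ≤ 12 * q ^ (p + 1) / (s * t) * Gr x (p + 1) / (2 * m)
        + 12 * q ^ (p + 1) / (s * t) * Gr x (p + 1) / (2 * m) := by gcongr
    _ = 12 * q ^ (p + 1) * Gr x (p + 1) / (s * t * m) := by field_simp; ring
    _ ≤ t⁻¹ * (48 ^ (p + 1) * q ^ (p + 1) * Gr x (p + 1) / ((2 * (p:ℝ) + 2) * m)) := by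
      rw [inv_mul_eq_div, div_div, div_le_div_iff₀ (by positivity) (by positivity)]
      have h1 : 12 * (2 * (p:ℝ) + 2) ≤ 48 ^ (p + 1) * s := by
        have h3 := mul_le_mul hW hs3 (by norm_num) (by positivity)
        linarith
      have h2 := mul_le_mul_of_nonneg_right h1
        (le_of_lt (mul_pos (mul_pos hQ hG2) (mul_pos hm ht)))
      nlinarith [h2]

lemma moment_sum_le {x b c : ℝ} (hx : 1 ≤ x) (hb : 0 ≤ b) (hc : 0 < c) (q : ℕ) :
    ∑ k ∈ Finset.range (q + 1),
        (q.choose k : ℝ) * (2 * c) ^ (q - k) * b ^ (2 * k)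
          * (Real.Gamma (x + q) / Real.Gamma (x + k))
      ≤ (b ^ 2 + 2 * c) ^ q * Gr x q := by
  have hΓx : 0 < Real.Gamma x := by simpa using gamma_shift_pos hx 0
  calc ∑ k ∈ Finset.range (q + 1),
        (q.choose k : ℝ) * (2 * c) ^ (q - k) * b ^ (2 * k)
          * (Real.Gamma (x + q) / Real.Gamma (x + k))
      ≤ ∑ k ∈ Finset.range (q + 1),
        (q.choose k : ℝ) * (2 * c) ^ (q - k) * (b ^ 2) ^ k
          * (Real.Gamma (x + q) / Real.Gamma x) := by
        apply Finset.sum_le_sum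
        intro k _
        rw [pow_mul]
        have h1 : Real.Gamma (x + q) / Real.Gamma (x + k) ≤ Real.Gamma (x + q) / Real.Gamma x := by
          apply div_le_div_of_nonneg_left (gamma_shift_pos hx q).le hΓx
          have h2 := gamma_shift_mono hx (Nat.zero_le k)
          simpa using h2
        have h3 : (0:ℝ) ≤ (q.choose k : ℝ) * (2 * c) ^ (q - k) * (b ^ 2) ^ k := by positivity
        exact mul_le_mul_of_nonneg_left h1 h3
    _ = (b ^ 2 + 2 * c) ^ q * Gr x q := by
        rw [show (Gr x q) = Real.Gamma (x + q) / Real.Gamma x from rfl, ← Finset.sum_mul, add_pow]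
        congr 1
        apply Finset.sum_congr rfl
        intro k _
        ring

lemma pointwise_odd {z U V : ℝ} (hz0 : 0 ≤ z) (hV : 0 ≤ V) (hUV : U * V = 1) (p : ℕ) :
    z ^ (2 * p + 1) / ((2 * p + 1).factorial : ℝ)
      ≤ (U * z ^ (2 * p + 2) + V * z ^ (2 * p)) / (2 * ((2 * p + 1).factorial : ℝ)) := by
  have h := amgm_aux hV hUV (pow_nonneg hz0 p) hz0
  have hm : (0:ℝ) < ((2 * p + 1).factorial : ℝ) := by positivity
  have e1 : z ^ (2 * p + 1) = (z ^ p) ^ 2 * z := by rw [pow_succ, pow_mul']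
  have e2 : z ^ (2 * p + 2) = (z ^ p) ^ 2 * z ^ 2 := by rw [pow_add, pow_mul']
  have e3 : z ^ (2 * p) = (z ^ p) ^ 2 := by rw [pow_mul']
  rw [e1, e2, e3, div_le_div_iff₀ hm (by positivity)]
  nlinarith [mul_le_mul_of_nonneg_right h hm.le]


/-- If the even moments of a nonnegative random variable `Y` satisfy, for every `p ≥ 1`, the
Laguerre-type bound `E[Y^{2p}] ≤ Σ_{k=0}^p (p choose k)(2c)^{p−k} b^{2k} Γ(ν/2+p)/Γ(ν/2+k)`
with `ν ≥ 2`, then for `θ > 0`, setting `𝐑 = 12θ²(b² + 2c)` and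
`Σ = Σ_{p=0}^∞ ((4𝐑)^p/(2p)!)Γ(ν/2+p)/Γ(ν/2)`, the series `Σ` converges and
`E[e^{θY}] ≤ 1 + (1 + 𝐑^{−1/2})(Σ − 1)`. -/
theorem exp_moment_bound {Ω : Type*} [MeasurableSpace Ω] (P : Measure Ω)
    [IsProbabilityMeasure P] (Y : Ω → ℝ) (hY : Measurable Y) (hYnn : ∀ ω, 0 ≤ Y ω)
    (ν c b θ : ℝ) (hν : 2 ≤ ν) (hc : 0 < c) (hb : 0 ≤ b) (hθ : 0 < θ)
    (hmom : ∀ p : ℕ, 1 ≤ p →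
      ∫⁻ ω, ENNReal.ofReal ((Y ω) ^ (2 * p)) ∂P ≤
        ENNReal.ofReal (∑ k ∈ Finset.range (p + 1),
          (p.choose k : ℝ) * (2 * c) ^ (p - k) * b ^ (2 * k) *
            (Real.Gamma (ν / 2 + p) / Real.Gamma (ν / 2 + k)))) :
    Summable (fun p : ℕ =>
        (4 * (12 * θ ^ 2 * (b ^ 2 + 2 * c))) ^ p / ((2 * p).factorial : ℝ) *
          (Real.Gamma (ν / 2 + p) / Real.Gamma (ν / 2))) ∧
    ∫⁻ ω, ENNReal.ofReal (Real.exp (θ * Y ω)) ∂P ≤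
      ENNReal.ofReal (1 + (1 + (12 * θ ^ 2 * (b ^ 2 + 2 * c)) ^ (-(1 / 2 : ℝ))) *
        ((∑' p : ℕ,
          (4 * (12 * θ ^ 2 * (b ^ 2 + 2 * c))) ^ p / ((2 * p).factorial : ℝ) *
            (Real.Gamma (ν / 2 + p) / Real.Gamma (ν / 2))) - 1)) := by
  have hx : 1 ≤ ν / 2 := by linarith
  set x := ν / 2 with hxdef
  set R := 12 * θ ^ 2 * (b ^ 2 + 2 * c) with hRdef
  have hbc : (0:ℝ) < b ^ 2 + 2 * c := by positivity
  have hR : 0 < R := by rw [hRdef]; positivity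
  have hsum : Summable (aa R x) := aa_summable hx hR
  have hgoal_eq : (fun p : ℕ => (4 * R) ^ p / ((2 * p).factorial : ℝ) *
      (Real.Gamma (x + p) / Real.Gamma x)) = aa R x := rfl
  refine ⟨by rw [hgoal_eq]; exact hsum, ?_⟩
  rw [hgoal_eq]
  -- basic positivity facts
  have hΓx : 0 < Real.Gamma x := by simpa using gamma_shift_pos hx 0
  set S := ∑' p : ℕ, aa R x p with hSdef
  have hS1 : 1 ≤ S := by
    have h0 := Summable.le_tsum hsum 0 (fun j _ => aa_nonneg hx hR j)
    rwa [aa_zero hx] at h0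
  have hRinv : (0:ℝ) ≤ R ^ (-(1/2 : ℝ)) := Real.rpow_nonneg hR.le _
  -- moment bounds for all q
  have hI : ∀ q : ℕ, ∫⁻ ω, ENNReal.ofReal (Y ω ^ (2 * q)) ∂P
      ≤ ENNReal.ofReal ((b ^ 2 + 2 * c) ^ q * Gr x q) := by
    intro q
    rcases Nat.eq_zero_or_pos q with h0 | h0
    · subst h0
      simp [Gr_zero hx]
    · exact (hmom q h0).trans (ENNReal.ofReal_le_ofReal (moment_sum_le hx hb hc q))
  -- expansion of the exponential
  have hz : ∀ ω, 0 ≤ θ * Y ω := fun ω => mul_nonneg hθ.le (hYnn ω)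
  have hmeasn : ∀ n : ℕ, Measurable fun ω => ENNReal.ofReal ((θ * Y ω) ^ n / (n.factorial : ℝ)) :=
    fun n => (((measurable_const.mul hY).pow_const n).div_const _).ennreal_ofReal
  have hexp : ∫⁻ ω, ENNReal.ofReal (Real.exp (θ * Y ω)) ∂P
      = ∑' n : ℕ, ∫⁻ ω, ENNReal.ofReal ((θ * Y ω) ^ n / (n.factorial : ℝ)) ∂P := by
    have h1 : ∀ ω, ENNReal.ofReal (Real.exp (θ * Y ω))
        = ∑' n : ℕ, ENNReal.ofReal ((θ * Y ω) ^ n / (n.factorial : ℝ)) := by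
      intro ω
      have h2 : Real.exp (θ * Y ω) = ∑' n : ℕ, (θ * Y ω) ^ n / (n.factorial : ℝ) := by
        rw [Real.exp_eq_exp_ℝ, NormedSpace.exp_eq_tsum_div]
      rw [h2]
      exact ENNReal.ofReal_tsum_of_nonneg
        (fun n => div_nonneg (pow_nonneg (hz ω) n) (Nat.cast_nonneg _))
        (Real.summable_pow_div_factorial _)
    simp_rw [h1]
    exact lintegral_tsum fun n => (hmeasn n).aemeasurable
  -- even terms
  have hFeven : ∀ p : ℕ,
      ∫⁻ ω, ENNReal.ofReal ((θ * Y ω) ^ (2 * p) / ((2 * p).factorial : ℝ)) ∂P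
        ≤ ENNReal.ofReal (aa R x p) := by
    intro p
    have hc1 : (0:ℝ) ≤ θ ^ (2 * p) / ((2 * p).factorial : ℝ) :=
      div_nonneg (pow_nonneg hθ.le _) (Nat.cast_nonneg _)
    have hrw : ∀ ω, ENNReal.ofReal ((θ * Y ω) ^ (2 * p) / ((2 * p).factorial : ℝ))
        = ENNReal.ofReal (θ ^ (2 * p) / ((2 * p).factorial : ℝ))
            * ENNReal.ofReal (Y ω ^ (2 * p)) := by
      intro ω
      rw [← ENNReal.ofReal_mul hc1]
      congr 1
      rw [mul_pow]
      ring
    calc ∫⁻ ω, ENNReal.ofReal ((θ * Y ω) ^ (2 * p) / ((2 * p).factorial : ℝ)) ∂P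
        = ENNReal.ofReal (θ ^ (2 * p) / ((2 * p).factorial : ℝ))
            * ∫⁻ ω, ENNReal.ofReal (Y ω ^ (2 * p)) ∂P := by
          simp_rw [hrw]
          exact lintegral_const_mul _ (hY.pow_const _).ennreal_ofReal
      _ ≤ ENNReal.ofReal (θ ^ (2 * p) / ((2 * p).factorial : ℝ))
            * ENNReal.ofReal ((b ^ 2 + 2 * c) ^ p * Gr x p) := mul_le_mul_right (hI p) _
      _ = ENNReal.ofReal (θ ^ (2 * p) / ((2 * p).factorial : ℝ)
            * ((b ^ 2 + 2 * c) ^ p * Gr x p)) := (ENNReal.ofReal_mul hc1).symm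
      _ ≤ ENNReal.ofReal (aa R x p) := by
          apply ENNReal.ofReal_le_ofReal
          have hqq : θ ^ (2 * p) * (b ^ 2 + 2 * c) ^ p = (θ ^ 2 * (b ^ 2 + 2 * c)) ^ p := by
            rw [mul_pow, pow_mul]
          calc θ ^ (2 * p) / ((2 * p).factorial : ℝ) * ((b ^ 2 + 2 * c) ^ p * Gr x p)
              = (θ ^ 2 * (b ^ 2 + 2 * c)) ^ p * Gr x p / ((2 * p).factorial : ℝ) := by
                rw [← hqq]; ring
            _ ≤ aa R x p := by
                apply even_real hx hR (by positivity)
                rw [hRdef]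
                nlinarith [mul_nonneg (sq_nonneg θ) hbc.le]
  -- odd terms
  set t := Real.sqrt R with htdef
  have ht : 0 < t := Real.sqrt_pos.2 hR
  have ht2 : t ^ 2 = R := Real.sq_sqrt hR.le
  have hs12 : (0:ℝ) < Real.sqrt 12 := by positivity
  set U := Real.sqrt 12 / t with hUdef
  set V := t / Real.sqrt 12 with hVdef
  have hU : 0 < U := by positivity
  have hV : 0 < V := by positivity
  have hUV : U * V = 1 := by
    rw [hUdef, hVdef]
    field_simp
  have hrinv : R ^ (-(1/2 : ℝ)) = t⁻¹ := by
    rw [Real.rpow_neg hR.le, htdef, Real.sqrt_eq_rpow]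
  have hFodd : ∀ p : ℕ,
      ∫⁻ ω, ENNReal.ofReal ((θ * Y ω) ^ (2 * p + 1) / ((2 * p + 1).factorial : ℝ)) ∂P
        ≤ ENNReal.ofReal (R ^ (-(1/2 : ℝ)) * aa R x (p + 1)) := by
    intro p
    set m := ((2 * p + 1).factorial : ℝ) with hmdef
    have hm : (0:ℝ) < m := by rw [hmdef]; positivity
    have hc1 : (0:ℝ) ≤ U * θ ^ (2 * p + 2) / (2 * m) := by positivity
    have hc2 : (0:ℝ) ≤ V * θ ^ (2 * p) / (2 * m) := by positivity
    calc ∫⁻ ω, ENNReal.ofReal ((θ * Y ω) ^ (2 * p + 1) / ((2 * p + 1).factorial : ℝ)) ∂P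
        ≤ ∫⁻ ω, ENNReal.ofReal ((U * (θ * Y ω) ^ (2 * p + 2) + V * (θ * Y ω) ^ (2 * p))
            / (2 * m)) ∂P := by
          apply lintegral_mono
          intro ω
          exact ENNReal.ofReal_le_ofReal (pointwise_odd (hz ω) hV.le hUV p)
      _ = ∫⁻ ω, (ENNReal.ofReal (U * θ ^ (2 * p + 2) / (2 * m))
              * ENNReal.ofReal (Y ω ^ (2 * p + 2))
            + ENNReal.ofReal (V * θ ^ (2 * p) / (2 * m))
              * ENNReal.ofReal (Y ω ^ (2 * p))) ∂P := by
          congr 1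
          funext ω
          rw [← ENNReal.ofReal_mul hc1, ← ENNReal.ofReal_mul hc2,
            ← ENNReal.ofReal_add (mul_nonneg hc1 (pow_nonneg (hYnn ω) _))
              (mul_nonneg hc2 (pow_nonneg (hYnn ω) _))]
          congr 1
          rw [mul_pow θ (Y ω), mul_pow θ (Y ω)]
          ring
      _ = ENNReal.ofReal (U * θ ^ (2 * p + 2) / (2 * m))
              * ∫⁻ ω, ENNReal.ofReal (Y ω ^ (2 * p + 2)) ∂P
            + ENNReal.ofReal (V * θ ^ (2 * p) / (2 * m))
              * ∫⁻ ω, ENNReal.ofReal (Y ω ^ (2 * p)) ∂P := by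
          rw [lintegral_add_left ((hY.pow_const _).ennreal_ofReal.const_mul _),
            lintegral_const_mul _ (hY.pow_const _).ennreal_ofReal,
            lintegral_const_mul _ (hY.pow_const _).ennreal_ofReal]
      _ ≤ ENNReal.ofReal (U * θ ^ (2 * p + 2) / (2 * m))
              * ENNReal.ofReal ((b ^ 2 + 2 * c) ^ (p + 1) * Gr x (p + 1))
            + ENNReal.ofReal (V * θ ^ (2 * p) / (2 * m))
              * ENNReal.ofReal ((b ^ 2 + 2 * c) ^ p * Gr x p) := by
          apply add_le_add
          · apply mul_le_mul_right
            have := hI (p + 1)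
            rwa [show 2 * (p + 1) = 2 * p + 2 by ring] at this
          · exact mul_le_mul_right (hI p) _
      _ = ENNReal.ofReal (U * θ ^ (2 * p + 2) / (2 * m) * ((b ^ 2 + 2 * c) ^ (p + 1) * Gr x (p + 1))
            + V * θ ^ (2 * p) / (2 * m) * ((b ^ 2 + 2 * c) ^ p * Gr x p)) := by
          rw [← ENNReal.ofReal_mul hc1, ← ENNReal.ofReal_mul hc2,
            ← ENNReal.ofReal_add]
          · exact mul_nonneg hc1 (mul_nonneg (by positivity) (Gr_pos hx (p + 1)).le)
          · exact mul_nonneg hc2 (mul_nonneg (by positivity) (Gr_pos hx p).le)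
      _ ≤ ENNReal.ofReal (R ^ (-(1/2 : ℝ)) * aa R x (p + 1)) := by
          apply ENNReal.ofReal_le_ofReal
          rw [hrinv]
          set q := θ ^ 2 * (b ^ 2 + 2 * c) with hqdef
          have hq : 0 < q := by rw [hqdef]; positivity
          have ht2q : t ^ 2 = 12 * q := by rw [ht2, hRdef, hqdef]; ring
          have hodd := odd_real hx hq ht ht2q p
          rw [show (12 : ℝ) * q = R by rw [hRdef, hqdef]; ring] at hodd
          have e1 : θ ^ (2 * p + 2) * (b ^ 2 + 2 * c) ^ (p + 1) = q ^ (p + 1) := by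
            rw [hqdef, show 2 * p + 2 = 2 * (p + 1) by ring, pow_mul, ← mul_pow]
          have e2 : θ ^ (2 * p) * (b ^ 2 + 2 * c) ^ p = q ^ p := by
            rw [hqdef, pow_mul, ← mul_pow]
          calc U * θ ^ (2 * p + 2) / (2 * m) * ((b ^ 2 + 2 * c) ^ (p + 1) * Gr x (p + 1))
                + V * θ ^ (2 * p) / (2 * m) * ((b ^ 2 + 2 * c) ^ p * Gr x p)
              = Real.sqrt 12 / t * q ^ (p + 1) * Gr x (p + 1) / (2 * m)
                + t / Real.sqrt 12 * q ^ p * Gr x p / (2 * m) := by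
                rw [hUdef, hVdef, ← e1, ← e2]; ring
            _ ≤ t⁻¹ * aa R x (p + 1) := hodd
  -- assemble
  have hsum2 : Summable (fun p : ℕ => R ^ (-(1/2 : ℝ)) * aa R x (p + 1)) :=
    ((summable_nat_add_iff 1).2 hsum).mul_left _
  have htail : ∑' p : ℕ, aa R x (p + 1) = S - 1 := by
    have h := Summable.tsum_eq_zero_add hsum
    rw [aa_zero hx] at h
    rw [hSdef]
    linarith
  rw [hexp, ← tsum_even_add_odd ENNReal.summable ENNReal.summable]
  calc (∑' p : ℕ, ∫⁻ ω, ENNReal.ofReal ((θ * Y ω) ^ (2 * p) / ((2 * p).factorial : ℝ)) ∂P)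
        + ∑' p : ℕ, ∫⁻ ω, ENNReal.ofReal ((θ * Y ω) ^ (2 * p + 1)
            / ((2 * p + 1).factorial : ℝ)) ∂P
      ≤ (∑' p : ℕ, ENNReal.ofReal (aa R x p))
        + ∑' p : ℕ, ENNReal.ofReal (R ^ (-(1/2 : ℝ)) * aa R x (p + 1)) :=
        add_le_add (ENNReal.tsum_le_tsum hFeven) (ENNReal.tsum_le_tsum hFodd)
    _ = ENNReal.ofReal S + ENNReal.ofReal (R ^ (-(1/2 : ℝ)) * (S - 1)) := by
        rw [← ENNReal.ofReal_tsum_of_nonneg (fun p => aa_nonneg hx hR p) hsum,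
          ← ENNReal.ofReal_tsum_of_nonneg
            (fun p => mul_nonneg hRinv (aa_nonneg hx hR _)) hsum2,
          tsum_mul_left, htail, hSdef]
    _ = ENNReal.ofReal (1 + (1 + R ^ (-(1/2 : ℝ))) * (S - 1)) := by
        rw [← ENNReal.ofReal_add (by linarith) (mul_nonneg hRinv (by linarith))]
        congr 1
        ring
end

section
/- Let κ < 0, t > 0 and θ ≥ 0 with θt < 1, and define ρ(r) = (4π r sinh(√(−κ) r)/√(−κ)) (2πt)^{−3/2} e^{−r²/(2t) + κt/2} for r > 0. Then ∫₀^∞ e^{θr²/2} ρ(r) dr = (1 − θt)^{−3/2} exp(−θκt²/(2(1 − θt))). That is, for a Brownian motion X(x) on ℍ³_κ, E[exp(θ r_x²(X_t(x))/2)] = (1 − θt)^{−3/2} exp(−θκt²/(2(1 − θt))), whose blow-up time in θ is independent of κ. -/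
open Real MeasureTheory Set

/-- Gaussian integral with a linear term: integrability. -/
lemma gauss_lin_integrable (a : ℝ) {b : ℝ} (hb : 0 < b) :
    Integrable (fun x : ℝ => x * Real.exp (a * x - b * x ^ 2)) := by
  set c : ℝ := a / (2 * b) with hc
  have key : ∀ x : ℝ, x * Real.exp (a * x - b * x ^ 2)
      = ((x - c) * Real.exp (-b * (x - c) ^ 2) + c * Real.exp (-b * (x - c) ^ 2))
          * Real.exp (b * c ^ 2) := by
    intro x
    have h1 : (x - c) * Real.exp (-b * (x - c) ^ 2) + c * Real.exp (-b * (x - c) ^ 2)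
        = x * Real.exp (-b * (x - c) ^ 2) := by ring
    rw [h1, mul_assoc, ← Real.exp_add]
    congr 2
    rw [hc]; field_simp [hb.ne']
    ring
  have hF : Integrable (fun u : ℝ =>
      u * Real.exp (-b * u ^ 2) + c * Real.exp (-b * u ^ 2)) :=
    (integrable_mul_exp_neg_mul_sq hb).add ((integrable_exp_neg_mul_sq hb).const_mul c)
  have := (hF.comp_sub_right c).mul_const (Real.exp (b * c ^ 2))
  exact this.congr (Filter.Eventually.of_forall fun x => (key x).symm)

/-- Gaussian integral with a linear term: value. -/
lemma gauss_lin_integral (a : ℝ) {b : ℝ} (hb : 0 < b) :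
    ∫ x : ℝ, x * Real.exp (a * x - b * x ^ 2)
      = a / (2 * b) * Real.sqrt (π / b) * Real.exp (a ^ 2 / (4 * b)) := by
  set c : ℝ := a / (2 * b) with hc
  have key : ∀ x : ℝ, x * Real.exp (a * x - b * x ^ 2)
      = ((x - c) * Real.exp (-b * (x - c) ^ 2) + c * Real.exp (-b * (x - c) ^ 2))
          * Real.exp (b * c ^ 2) := by
    intro x
    have h1 : (x - c) * Real.exp (-b * (x - c) ^ 2) + c * Real.exp (-b * (x - c) ^ 2)
        = x * Real.exp (-b * (x - c) ^ 2) := by ring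
    rw [h1, mul_assoc, ← Real.exp_add]
    congr 2
    rw [hc]; field_simp [hb.ne']
    ring
  simp_rw [key]
  rw [integral_mul_const, integral_sub_right_eq_self
    (fun u : ℝ => u * Real.exp (-b * u ^ 2) + c * Real.exp (-b * u ^ 2)) c]
  have hodd : ∫ u : ℝ, u * Real.exp (-b * u ^ 2) = 0 := by
    have h := integral_neg_eq_self (fun u : ℝ => u * Real.exp (-b * u ^ 2)) volume
    simp only [neg_sq] at h
    have h2 : ∫ u : ℝ, -u * Real.exp (-b * u ^ 2)
        = -∫ u : ℝ, u * Real.exp (-b * u ^ 2) := by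
      rw [← integral_neg]; congr 1; funext u; ring
    linarith [h.symm.trans h2]
  rw [integral_add (integrable_mul_exp_neg_mul_sq hb)
    ((integrable_exp_neg_mul_sq hb).const_mul c), hodd, integral_const_mul,
    integral_gaussian, zero_add]
  have hbc : b * c ^ 2 = a ^ 2 / (4 * b) := by
    rw [hc]; field_simp; ring
  rw [hbc]

/-- Exponential square moment of the radial process of Brownian motion on `ℍ³_κ`: with the
radial density `ρ(r) = (4πr sinh(√(−κ)r)/√(−κ))(2πt)^{−3/2} e^{−r²/(2t)+κt/2}`, for `θ ≥ 0`
with `θt < 1` one has `∫₀^∞ e^{θr²/2} ρ(r) dr = (1 − θt)^{−3/2} exp(−θκt²/(2(1 − θt)))`. -/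
theorem hyperbolic3_exp_sq_moment (κ t θ : ℝ) (hκ : κ < 0) (ht : 0 < t) (hθ : 0 ≤ θ)
    (hθt : θ * t < 1) :
    ∫ r in Set.Ioi (0 : ℝ),
        Real.exp (θ * r ^ 2 / 2) *
          ((4 * Real.pi * r * Real.sinh (Real.sqrt (-κ) * r) / Real.sqrt (-κ)) *
            (2 * Real.pi * t) ^ (-(3 : ℝ) / 2) * Real.exp (-r ^ 2 / (2 * t) + κ * t / 2))
      = (1 - θ * t) ^ (-(3 : ℝ) / 2) *
          Real.exp (-θ * κ * t ^ 2 / (2 * (1 - θ * t))) := by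
  have hκ' : (0 : ℝ) < -κ := by linarith
  set a : ℝ := Real.sqrt (-κ) with haa
  have ha : 0 < a := Real.sqrt_pos.2 hκ'
  have ha2 : a ^ 2 = -κ := Real.sq_sqrt hκ'.le
  set b : ℝ := (1 - θ * t) / (2 * t) with hbb
  have h1θt : 0 < 1 - θ * t := by linarith
  have hb : 0 < b := div_pos h1θt (by linarith)
  set C : ℝ := 4 * π / a * (2 * π * t) ^ (-(3 : ℝ) / 2) * Real.exp (κ * t / 2) with hC
  -- rewrite the integrand
  have hint : ∀ r : ℝ, Real.exp (θ * r ^ 2 / 2) *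
      ((4 * Real.pi * r * Real.sinh (a * r) / a) *
        (2 * Real.pi * t) ^ (-(3 : ℝ) / 2) * Real.exp (-r ^ 2 / (2 * t) + κ * t / 2))
      = C * (r * Real.sinh (a * r) * Real.exp (-b * r ^ 2)) := by
    intro r
    have hexp : Real.exp (θ * r ^ 2 / 2) * Real.exp (-r ^ 2 / (2 * t) + κ * t / 2)
        = Real.exp (-b * r ^ 2) * Real.exp (κ * t / 2) := by
      rw [← Real.exp_add, ← Real.exp_add]
      congr 1
      rw [hbb]; field_simp
      ring
    calc Real.exp (θ * r ^ 2 / 2) *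
        ((4 * Real.pi * r * Real.sinh (a * r) / a) *
          (2 * Real.pi * t) ^ (-(3 : ℝ) / 2) * Real.exp (-r ^ 2 / (2 * t) + κ * t / 2))
        = (4 * Real.pi * r * Real.sinh (a * r) / a) * (2 * Real.pi * t) ^ (-(3 : ℝ) / 2)
            * (Real.exp (θ * r ^ 2 / 2) * Real.exp (-r ^ 2 / (2 * t) + κ * t / 2)) := by ring
      _ = _ := by rw [hexp, hC]; ring
  simp_rw [hint]
  rw [integral_const_mul]
  -- compute the half-line integral via evenness
  have heven : ∫ x : ℝ, |x| * Real.sinh (a * |x|) * Real.exp (-b * |x| ^ 2)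
      = 2 * ∫ r in Set.Ioi (0 : ℝ), r * Real.sinh (a * r) * Real.exp (-b * r ^ 2) :=
    integral_comp_abs (f := fun x : ℝ => x * Real.sinh (a * x) * Real.exp (-b * x ^ 2))
  have heq : ∀ x : ℝ, |x| * Real.sinh (a * |x|) * Real.exp (-b * |x| ^ 2)
      = x * Real.sinh (a * x) * Real.exp (-b * x ^ 2) := by
    intro x
    rcases abs_cases x with ⟨h, _⟩ | ⟨h, _⟩
    · rw [h]
    · rw [h, neg_sq, show a * -x = -(a * x) from by ring, Real.sinh_neg]
      ring
  simp_rw [heq] at heven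
  -- split sinh into exponentials
  have hsplit : ∀ x : ℝ, x * Real.sinh (a * x) * Real.exp (-b * x ^ 2)
      = (1 / 2) * (x * Real.exp (a * x - b * x ^ 2))
        - (1 / 2) * (x * Real.exp (-a * x - b * x ^ 2)) := by
    intro x
    have e1 : Real.exp (a * x - b * x ^ 2) = Real.exp (a * x) * Real.exp (-b * x ^ 2) := by
      rw [← Real.exp_add]; ring_nf
    have e2 : Real.exp (-a * x - b * x ^ 2)
        = Real.exp (-(a * x)) * Real.exp (-b * x ^ 2) := by
      rw [← Real.exp_add]; ring_nf
    rw [Real.sinh_eq, e1, e2]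
    ring
  have hline : ∫ x : ℝ, x * Real.sinh (a * x) * Real.exp (-b * x ^ 2)
      = a / (2 * b) * Real.sqrt (π / b) * Real.exp (a ^ 2 / (4 * b)) := by
    simp_rw [hsplit]
    rw [integral_sub ((gauss_lin_integrable a hb).const_mul _)
      ((gauss_lin_integrable (-a) hb).const_mul _),
      integral_const_mul, integral_const_mul, gauss_lin_integral a hb,
      gauss_lin_integral (-a) hb]
    have : (-a) ^ 2 = a ^ 2 := by ring
    rw [this]
    ring
  have hIoi : ∫ r in Set.Ioi (0 : ℝ), r * Real.sinh (a * r) * Real.exp (-b * r ^ 2)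
      = (1 / 2) * (a / (2 * b) * Real.sqrt (π / b) * Real.exp (a ^ 2 / (4 * b))) := by
    rw [← hline, heven]; ring
  rw [hIoi, hC]
  -- final algebra
  have hexp2 : Real.exp (κ * t / 2) * Real.exp (a ^ 2 / (4 * b))
      = Real.exp (-θ * κ * t ^ 2 / (2 * (1 - θ * t))) := by
    rw [← Real.exp_add]
    congr 1
    rw [ha2, hbb]
    field_simp [(by rw [mul_comm]; exact h1θt.ne' : 1 - t * θ ≠ 0)]
    ring
  have hπb : π / b = 2 * π * t / (1 - θ * t) := by
    rw [hbb]
    field_simp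
  have hπbpos : 0 < π / b := div_pos pi_pos hb
  have h2πt : 0 < 2 * π * t := by positivity
  have hpow : 4 * π / a * (2 * π * t) ^ (-(3 : ℝ) / 2) * (1 / 2)
      * (a / (2 * b) * Real.sqrt (π / b))
      = (1 - θ * t) ^ (-(3 : ℝ) / 2) := by
    have hstep : 4 * π / a * (2 * π * t) ^ (-(3 : ℝ) / 2) * (1 / 2)
        * (a / (2 * b) * Real.sqrt (π / b))
        = (π / b) * Real.sqrt (π / b) * (2 * π * t) ^ (-(3 : ℝ) / 2) := by
      field_simp
      ring
    rw [hstep, Real.sqrt_eq_rpow]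
    have h32 : (π / b) * (π / b) ^ ((1 : ℝ) / 2) = (π / b) ^ ((3 : ℝ) / 2) := by
      nth_rewrite 1 [← Real.rpow_one (π / b)]
      rw [← Real.rpow_add hπbpos]
      norm_num
    rw [h32, hπb, Real.div_rpow h2πt.le h1θt.le,
      show (-(3 : ℝ)/2) = -((3 : ℝ)/2) from by norm_num,
      Real.rpow_neg h2πt.le, Real.rpow_neg h1θt.le]
    have hA : (2 * π * t) ^ ((3 : ℝ)/2) ≠ 0 := by positivity
    have hB : (1 - θ * t) ^ ((3 : ℝ)/2) ≠ 0 := by positivity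
    field_simp
  calc 4 * π / a * (2 * π * t) ^ (-(3 : ℝ) / 2) * Real.exp (κ * t / 2) *
      (1 / 2 * (a / (2 * b) * Real.sqrt (π / b) * Real.exp (a ^ 2 / (4 * b))))
      = (4 * π / a * (2 * π * t) ^ (-(3 : ℝ) / 2) * (1 / 2)
          * (a / (2 * b) * Real.sqrt (π / b)))
        * (Real.exp (κ * t / 2) * Real.exp (a ^ 2 / (4 * b))) := by ring
    _ = _ := by rw [hpow, hexp2]
end
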